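/- arXiv:2012.12670 — 3 statements merged into one kernel-verified Lean document; each statement's English description precedes it below -/
import Mathlib

section
/- For every x* ∈ ℝ^d and every c > 0, the function f(θ) := ∏_{i=1}^d (1 + exp(2c(θ_i − x*_i)))^{-1} is a measurable map from ℝ^d into the open interval (0,1), and for every regular probability measure ν on ℝ^d the pushforward measure f_#ν is regular on (0,1); that is, f belongs to the set of test functions F_d. -/
open MeasureTheory Set

/-- The open interval (a,b) in ℝ, with possibly infinite endpoints a, b ∈ EReal. -/
def erealIoo (a b : EReal) : Set ℝ := {x : ℝ | a < (x : EReal) ∧ (x : EReal) < b}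

/-- A measure on ℝ is regular on (a,b) if it is supported in (a,b) and equivalent to
the restriction of Lebesgue measure to (a,b). -/
def regularOn (γ : Measure ℝ) (a b : EReal) : Prop :=
  γ (erealIoo a b)ᶜ = 0 ∧
  γ ≪ volume.restrict (erealIoo a b) ∧
  volume.restrict (erealIoo a b) ≪ γ

/-- A measure on ℝ^d is regular if it is equivalent to Lebesgue measure. -/
def regular {d : ℕ} (ν : Measure (Fin d → ℝ)) : Prop :=
  ν ≪ volume ∧ volume ≪ ν

/-- The set of test functions F_d: measurable f : ℝ^d → ℝ with range in some open interval
(a,b), such that f_#ν is regular on (a,b) whenever ν is a regular probability measure. -/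
def testFun {d : ℕ} (f : (Fin d → ℝ) → ℝ) : Prop :=
  Measurable f ∧
  ∃ a b : EReal, a < b ∧ (∀ x, a < (f x : EReal) ∧ (f x : EReal) < b) ∧
    ∀ ν : Measure (Fin d → ℝ), IsProbabilityMeasure ν → regular ν →
      regularOn (ν.map f) a b

/-!
Each factor `(1 + exp (2c(θᵢ - x*ᵢ)))⁻¹ = sigmoid (2c(x*ᵢ - θᵢ))` is a diffeomorphism of `ℝ` onto
`(0,1)`, so by the change of variables formula a set `S ⊆ ℝ` has a Lebesgue-null preimage under
`t ↦ sigmoid (2c(a - t)) · P` iff `S ∩ (0,P)` is null. Splitting off the first coordinate,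
Fubini shows that `f⁻¹(S)` is null iff `S ∩ (0, P(y))` is null for almost every value `P(y)` of
the product of the remaining factors; since `P` is continuous with supremum `1`, this happens iff
`S ∩ (0,1)` is null. Regularity of `f_#ν` for `ν` equivalent to Lebesgue measure follows.
-/

open Filter Topology Function Real

theorem addHaar_preimage_eq_zero_iff_of_hasFDerivAt {E : Type*} [NormedAddCommGroup E]
    [NormedSpace ℝ E] [FiniteDimensional ℝ E] [MeasurableSpace E] [BorelSpace E]
    (μ : Measure E) [μ.IsAddHaarMeasure] {f : E → E} {f' : E → E →L[ℝ] E}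
    (hf' : ∀ x, HasFDerivAt f (f' x) x) (hdet : ∀ x, (f' x).det ≠ 0) (hinj : Injective f)
    {s : Set E} (hs : MeasurableSet s) :
    μ (f ⁻¹' s) = 0 ↔ μ (s ∩ range f) = 0 := by
  have hf'univ : ∀ x ∈ univ, HasFDerivWithinAt f (f' x) univ x :=
    fun x _ => (hf' x).hasFDerivWithinAt
  have hmap := map_withDensity_abs_det_fderiv_eq_addHaar μ nullMeasurableSet_univ hf'univ
    hinj.injOn
  have hdens := aemeasurable_ofReal_abs_det_fderivWithin μ MeasurableSet.univ hf'univ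
  simp only [Measure.restrict_univ, image_univ] at hmap hdens
  have hf : Measurable f := (continuous_iff_continuousAt.2 fun x => (hf' x).continuousAt).measurable
  rw [← Measure.restrict_apply hs, ← hmap, Measure.map_apply hf hs,
    withDensity_apply_eq_zero' hdens]
  simp [hdet]

theorem volume_preimage_eq_zero_iff_of_hasDerivAt {f f' : ℝ → ℝ}
    (hf : ∀ x, HasDerivAt f (f' x) x) (hf' : ∀ x, f' x ≠ 0) (hinj : Injective f)
    {s : Set ℝ} (hs : MeasurableSet s) :
    volume (f ⁻¹' s) = 0 ↔ volume (s ∩ range f) = 0 :=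
  addHaar_preimage_eq_zero_iff_of_hasFDerivAt volume (fun x => (hf x).hasFDerivAt)
    (by simpa [ContinuousLinearMap.smulRight_one_eq_toSpanSingleton,
      ContinuousLinearMap.det_toSpanSingleton] using hf') hinj hs

theorem Measure.prod_apply_eq_zero_iff_ae_right {α β : Type*} [MeasurableSpace α]
    [MeasurableSpace β] {μ : Measure α} {ν : Measure β} [SFinite μ] [SFinite ν]
    {s : Set (α × β)} (hs : MeasurableSet s) :
    μ.prod ν s = 0 ↔ ∀ᵐ y ∂ν, μ ((·, y) ⁻¹' s) = 0 := by
  rw [← Measure.prod_swap, Measure.map_apply measurable_swap hs,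
    Measure.measure_prod_null (measurable_swap hs)]
  rfl

theorem measure_inter_Ioo_eq_zero_of_ae {Y : Type*} [TopologicalSpace Y] [MeasurableSpace Y]
    {μ : Measure Y} [μ.IsOpenPosMeasure] {ρ : Measure ℝ} {P : Y → ℝ} (hP : Continuous P)
    {a b : ℝ} (hsup : ∀ q < b, ∃ y, q < P y) {S : Set ℝ}
    (hnull : ∀ᵐ y ∂μ, ρ (S ∩ Ioo a (P y)) = 0) :
    ρ (S ∩ Ioo a b) = 0 := by
  have hq : ∀ q < b, ρ (S ∩ Ioo a q) = 0 := by
    intro q hq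
    have hpos : μ {y | q < P y} ≠ 0 :=
      (isOpen_lt continuous_const hP).measure_ne_zero μ (hsup q hq)
    obtain ⟨y, hqy, hy⟩ := ((frequently_ae_iff.2 hpos).and_eventually hnull).exists
    exact measure_mono_null (inter_subset_inter_right _ (Ioo_subset_Ioo_right hqy.le)) hy
  have hcover : S ∩ Ioo a b ⊆ ⋃ k : ℕ, S ∩ Ioo a (b - 1 / (k + 1)) := by
    rintro x ⟨hxS, hax, hxb⟩
    obtain ⟨k, hk⟩ := exists_nat_one_div_lt (sub_pos.2 hxb)
    exact mem_iUnion.2 ⟨k, hxS, hax, by linarith⟩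
  exact measure_mono_null hcover
    (measure_iUnion_null fun k => hq _ (sub_lt_self b (by positivity)))

theorem volume_preimage_sigmoid_mul_eq_zero_iff {k a P : ℝ} (hk : k ≠ 0) (hP : 0 < P)
    {S : Set ℝ} (hS : MeasurableSet S) :
    volume ((fun t => sigmoid (k * (a - t)) * P) ⁻¹' S) = 0 ↔ volume (S ∩ Ioo 0 P) = 0 := by
  have hderiv : ∀ t, HasDerivAt (fun t => sigmoid (k * (a - t)) * P)
      (sigmoid (k * (a - t)) * (1 - sigmoid (k * (a - t))) * (k * -1) * P) t := fun t =>
    (((hasDerivAt_id t).const_sub a).const_mul k |> (hasDerivAt_sigmoid _).comp t).mul_const P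
  have hderiv_ne : ∀ t, sigmoid (k * (a - t)) * (1 - sigmoid (k * (a - t))) * (k * -1) * P ≠ 0 :=
    fun t => by
      have := sigmoid_lt_one (k * (a - t))
      have := sigmoid_pos (k * (a - t))
      simp only [ne_eq, mul_eq_zero, not_or]
      exact ⟨⟨⟨by positivity, by linarith⟩, hk, by norm_num⟩, hP.ne'⟩
  have hinj : Injective fun t => sigmoid (k * (a - t)) * P := fun s t hst => by
    simpa [hk, hP.ne', sigmoid_inj] using hst
  have hrange : range (fun t => sigmoid (k * (a - t)) * P) = Ioo 0 P := by
    have hsurj : Surjective fun t => k * (a - t) := fun u => ⟨a - u / k, by field_simp; ring⟩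
    rw [show (fun t => sigmoid (k * (a - t)) * P) = (· * P) ∘ sigmoid ∘ (fun t => k * (a - t))
      from rfl, range_comp, range_comp, hsurj.range_eq, image_univ, range_sigmoid,
      image_mul_right_Ioo _ _ hP, zero_mul, one_mul]
  rw [volume_preimage_eq_zero_iff_of_hasDerivAt hderiv hderiv_ne hinj hS, hrange]

noncomputable def sigmoidProd {n : ℕ} (k : ℝ) (x θ : Fin n → ℝ) : ℝ :=
  ∏ i, sigmoid (k * (x i - θ i))

section sigmoidProd

variable {n : ℕ} (k : ℝ) (x θ : Fin n → ℝ)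

theorem sigmoidProd_pos : 0 < sigmoidProd k x θ :=
  Finset.prod_pos fun _ _ => sigmoid_pos _

theorem sigmoidProd_le_one : sigmoidProd k x θ ≤ 1 :=
  Finset.prod_le_one (fun _ _ => sigmoid_nonneg _) fun _ _ => sigmoid_le_one _

theorem sigmoidProd_succ (x θ : Fin (n + 1) → ℝ) :
    sigmoidProd k x θ = sigmoid (k * (x 0 - θ 0)) * sigmoidProd k (Fin.tail x) (Fin.tail θ) :=
  Fin.prod_univ_succ _

theorem sigmoidProd_lt_one (x θ : Fin (n + 1) → ℝ) : sigmoidProd k x θ < 1 := by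
  rw [sigmoidProd_succ]
  exact (mul_le_of_le_one_right (sigmoid_nonneg _) (sigmoidProd_le_one _ _ _)).trans_lt
    (sigmoid_lt_one _)

theorem continuous_sigmoidProd : Continuous (sigmoidProd k x) :=
  continuous_finsetProd _ fun _ _ => continuous_sigmoid.comp (by fun_prop)

variable {k}

-- Along `θ = x - k M`, every factor equals `sigmoid (k² M)`, which tends to `1`.
theorem exists_lt_sigmoidProd (hk : k ≠ 0) {q : ℝ} (hq : q < 1) :
    ∃ θ, q < sigmoidProd k x θ := by
  have hlim : Tendsto (fun M : ℝ => sigmoidProd k x (fun i => x i - k * M)) atTop (𝓝 1) := by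
    rw [← Finset.prod_const_one]
    refine tendsto_finsetProd _ fun i _ => ?_
    have : Tendsto (fun M : ℝ => k * k * M) atTop atTop :=
      tendsto_id.const_mul_atTop (mul_self_pos.2 hk)
    convert tendsto_sigmoid_atTop.comp this using 2 with M
    simp only [comp_apply]
    ring_nf
  obtain ⟨M, hM⟩ := (hlim.eventually (eventually_gt_nhds hq)).exists
  exact ⟨_, hM⟩

theorem volume_preimage_sigmoidProd_eq_zero_iff (hk : k ≠ 0) (x : Fin (n + 1) → ℝ)
    {S : Set ℝ} (hS : MeasurableSet S) :
    volume (sigmoidProd k x ⁻¹' S) = 0 ↔ volume (S ∩ Ioo 0 1) = 0 := by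
  have hmeas : MeasurableSet (sigmoidProd k x ⁻¹' S) :=
    (continuous_sigmoidProd k x).measurable hS
  have hslice : ∀ y, volume ((fun t => sigmoidProd k x (Fin.cons t y)) ⁻¹' S) = 0 ↔
      volume (S ∩ Ioo 0 (sigmoidProd k (Fin.tail x) y)) = 0 := fun y => by
    simp only [sigmoidProd_succ k x, Fin.cons_zero, Fin.tail_cons]
    exact volume_preimage_sigmoid_mul_eq_zero_iff hk (sigmoidProd_pos _ _ _) hS
  have he := (volume_preserving_piFinSuccAbove (fun _ : Fin (n + 1) => ℝ) 0).symm
  rw [← he.measure_preimage hmeas.nullMeasurableSet, Measure.volume_eq_prod,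
    Measure.prod_apply_eq_zero_iff_ae_right (he.measurable hmeas)]
  simp only [MeasurableEquiv.piFinSuccAbove_symm_apply, Fin.insertNthEquiv_zero,
    preimage_preimage]
  constructor
  · intro h
    exact measure_inter_Ioo_eq_zero_of_ae (continuous_sigmoidProd k _)
      (fun q hq => exists_lt_sigmoidProd _ hk hq) (h.mono fun y hy => (hslice y).1 hy)
  · intro h
    refine ae_of_all _ fun y => (hslice y).2 (measure_mono_null ?_ h)
    exact inter_subset_inter_right _ (Ioo_subset_Ioo_right (sigmoidProd_le_one _ _ _))

end sigmoidProd

theorem erealIoo_coe (a b : ℝ) : erealIoo a b = Ioo a b := by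
  ext; simp [erealIoo]

theorem regularOn_map_of_preimage_null_iff {α : Type*} [MeasurableSpace α] {μ ν : Measure α}
    (hνμ : ν ≪ μ) (hμν : μ ≪ ν) {f : α → ℝ} (hf : Measurable f) {a b : EReal}
    (hnull : ∀ S, MeasurableSet S → (μ (f ⁻¹' S) = 0 ↔ volume (S ∩ erealIoo a b) = 0)) :
    regularOn (ν.map f) a b := by
  have hI : MeasurableSet (erealIoo a b) := measurableSet_Ioo.preimage measurable_coe_real_ereal
  refine ⟨?_, .mk fun s hs h => ?_, .mk fun s hs h => ?_⟩
  · rw [Measure.map_apply hf hI.compl]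
    exact hνμ ((hnull _ hI.compl).2 (by rw [compl_inter_self, measure_empty]))
  · rw [Measure.restrict_apply hs] at h
    rw [Measure.map_apply hf hs]
    exact hνμ ((hnull s hs).2 h)
  · rw [Measure.map_apply hf hs] at h
    rw [Measure.restrict_apply hs]
    exact (hnull s hs).1 (hμν h)

/-- For every x* ∈ ℝ^d and c > 0, the function
f(θ) = ∏_i (1 + exp(2c(θ_i − x*_i)))⁻¹ is measurable, takes values in (0,1), pushes
every regular probability measure forward to a measure regular on (0,1), and hence is
a test function in F_d. -/
theorem stmt_4 {d : ℕ} (hd : 0 < d) (xstar : Fin d → ℝ) (c : ℝ) (hc : 0 < c) :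
    Measurable (fun θ : Fin d → ℝ => ∏ i, (1 + Real.exp (2 * c * (θ i - xstar i)))⁻¹) ∧
    (∀ θ : Fin d → ℝ,
      (∏ i, (1 + Real.exp (2 * c * (θ i - xstar i)))⁻¹) ∈ Ioo (0:ℝ) 1) ∧
    (∀ ν : Measure (Fin d → ℝ), IsProbabilityMeasure ν → regular ν →
      regularOn (ν.map (fun θ => ∏ i, (1 + Real.exp (2 * c * (θ i - xstar i)))⁻¹))
        (0 : EReal) (1 : EReal)) ∧
    testFun (fun θ : Fin d → ℝ => ∏ i, (1 + Real.exp (2 * c * (θ i - xstar i)))⁻¹) := by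
  obtain ⟨n, rfl⟩ := Nat.exists_eq_add_one_of_ne_zero hd.ne'
  have hf (θ : Fin (n + 1) → ℝ) :
      ∏ i, (1 + Real.exp (2 * c * (θ i - xstar i)))⁻¹ = sigmoidProd (2 * c) xstar θ := by
    refine Finset.prod_congr rfl fun i _ => ?_
    rw [sigmoid_def]
    ring_nf
  have hk : 2 * c ≠ 0 := by positivity
  have hmeas := (continuous_sigmoidProd (2 * c) xstar).measurable
  have hmem θ : sigmoidProd (2 * c) xstar θ ∈ Ioo 0 1 :=
    ⟨sigmoidProd_pos _ _ _, sigmoidProd_lt_one _ _ _⟩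
  have hreg (ν : Measure (Fin (n + 1) → ℝ)) (_ : IsProbabilityMeasure ν) (hν : regular ν) :
      regularOn (ν.map (sigmoidProd (2 * c) xstar)) 0 1 :=
    regularOn_map_of_preimage_null_iff hν.1 hν.2 hmeas fun S hS => by
      simpa [← EReal.coe_zero, ← EReal.coe_one, erealIoo_coe] using
        volume_preimage_sigmoidProd_eq_zero_iff hk xstar hS
  simp only [hf]
  refine ⟨hmeas, hmem, hreg, hmeas, 0, 1, zero_lt_one, fun θ => ?_, hreg⟩
  exact ⟨EReal.coe_pos.2 (hmem θ).1, by exact_mod_cast (hmem θ).2⟩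
end

section
/- (Partial posteriors are strongly calibrated.) Let ρ be a probability measure on ℝ^d × Y, where Y is a standard Borel space, representing the joint law of a parameter θ and data y, and let s : Y → S be a measurable summary statistic into a standard Borel space S. Let κ : S → P(ℝ^d) be the conditional distribution of θ given s(y) (a disintegration of the joint law of (θ, s(y)) over the law of s(y)). Let f : ℝ^d → ℝ be measurable with range in an open interval (a,b) and suppose that for almost every value u of s(y) the pushforward f_#(κ(u)) is regular on (a,b). Then the pushforward of ρ under the map (θ, y) ↦ F_{f_#κ(s(y))}(f(θ)), where F_{f_#κ(u)}(z) := κ(u)({x : f(x) ≤ z}), is the uniform distribution on (0,1). -/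
set_option linter.unusedVariables false


open MeasureTheory ProbabilityTheory Set

/-- The uniform probability distribution on the open interval (0,1). -/
noncomputable def unif01 : Measure ℝ := volume.restrict (Ioo (0:ℝ) 1)

lemma unif01_Iic (t : ℝ) (ht0 : 0 ≤ t) (ht1 : t < 1) :
    unif01 (Iic t) = ENNReal.ofReal t := by
  rw [unif01, Measure.restrict_apply measurableSet_Iic]
  have : Iic t ∩ Ioo (0:ℝ) 1 = Ioc 0 t := by
    ext x; simp only [mem_inter_iff, mem_Iic, mem_Ioo, mem_Ioc]
    constructor
    · rintro ⟨ha, hb, hc⟩; exact ⟨hb, ha⟩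
    · rintro ⟨ha, hb⟩; exact ⟨hb, ha, lt_of_le_of_lt hb ht1⟩
  rw [this, Real.volume_Ioc, sub_zero]

lemma unif01_Iic_one_le (t : ℝ) (ht : 1 ≤ t) : unif01 (Iic t) = 1 := by
  rw [unif01, Measure.restrict_apply measurableSet_Iic]
  have : Iic t ∩ Ioo (0:ℝ) 1 = Ioo 0 1 := by
    rw [inter_eq_right]; intro x hx; exact le_trans hx.2.le ht
  rw [this, Real.volume_Ioo]; norm_num

lemma unif01_Iic_neg (t : ℝ) (ht : t < 0) : unif01 (Iic t) = 0 := by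
  rw [unif01, Measure.restrict_apply measurableSet_Iic]
  have : Iic t ∩ Ioo (0:ℝ) 1 = ∅ := by
    ext x; simp only [mem_inter_iff, mem_Iic, mem_Ioo, mem_empty_iff_false, iff_false]
    rintro ⟨h1, h2, h3⟩; linarith
  rw [this, measure_empty]

instance : IsProbabilityMeasure unif01 := by
  constructor
  rw [unif01, Measure.restrict_apply_univ, Real.volume_Ioo]
  norm_num

lemma pit (γ : Measure ℝ) [IsProbabilityMeasure γ] (hac : γ ≪ volume) :
    γ.map (fun c => (γ (Iic c)).toReal) = unif01 := by
  set F : ℝ → ℝ := fun c => (γ (Iic c)).toReal with hF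
  have hFmono : Monotone F := fun c d hcd =>
    ENNReal.toReal_mono (measure_ne_top _ _) (measure_mono (Iic_subset_Iic.2 hcd))
  have hFmeas : Measurable F := hFmono.measurable
  have hatom : ∀ x : ℝ, γ {x} = 0 := fun x => hac (Real.volume_singleton)
  have hF0 : ∀ c, 0 ≤ F c := fun c => ENNReal.toReal_nonneg
  have hF1 : ∀ c, F c ≤ 1 := fun c => by
    simpa using ENNReal.toReal_mono ENNReal.one_ne_top (prob_le_one (μ := γ) (s := Iic c))
  have key : ∀ t : ℝ, 0 ≤ t → t < 1 → γ {c | F c ≤ t} = ENNReal.ofReal t := by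
    intro t ht0 ht1
    rcases eq_empty_or_nonempty {c | F c ≤ t} with hne | hne
    · rw [hne, measure_empty]
      rcases eq_or_lt_of_le ht0 with h | h
      · simp [← h]
      · exfalso
        have hinter0 : (⋂ n : ℕ, Iic (-(n:ℝ))) = ∅ := by
          ext c
          simp only [mem_iInter, mem_Iic, mem_empty_iff_false, iff_false]
          push_neg
          obtain ⟨n, hn⟩ := exists_nat_gt (-c)
          exact ⟨n, by linarith⟩
        have hanti0 : Antitone fun n : ℕ => Iic (-(n:ℝ)) := by
          intro m n hmn
          apply Iic_subset_Iic.2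
          simp only [neg_le_neg_iff]
          exact_mod_cast hmn
        have hinf : (⨅ n : ℕ, γ (Iic (-(n:ℝ)))) = 0 := by
          rw [← hanti0.directed_ge.measure_iInter
            (fun n => measurableSet_Iic.nullMeasurableSet) ⟨0, measure_ne_top _ _⟩, hinter0,
            measure_empty]
        have hex : ∃ n : ℕ, γ (Iic (-(n:ℝ))) < ENNReal.ofReal t := by
          by_contra hcon
          push_neg at hcon
          have h2 : ENNReal.ofReal t ≤ 0 := hinf ▸ le_iInf hcon
          exact absurd h2 (not_le.2 (ENNReal.ofReal_pos.2 h))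
        obtain ⟨c', hc⟩ := hex
        set c : ℝ := -(c':ℝ)
        have : F c ≤ t := by
          have h2 := ENNReal.toReal_mono ENNReal.ofReal_ne_top hc.le
          rwa [ENNReal.toReal_ofReal ht0] at h2
        exact (eq_empty_iff_forall_notMem.1 hne c) this
    · have hbdd : BddAbove {c | F c ≤ t} := by
        have htend := tendsto_measure_Iic_atTop (μ := γ)
        have hev : ∀ᶠ c in Filter.atTop, ENNReal.ofReal t < γ (Iic c) := by
          refine htend.eventually_const_lt ?_
          rw [measure_univ]
          exact ENNReal.ofReal_lt_one.2 ht1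
        obtain ⟨M, hM⟩ := hev.exists
        refine ⟨M, fun c hc => ?_⟩
        by_contra hcM
        push_neg at hcM
        have h1 : γ (Iic M) ≤ γ (Iic c) := measure_mono (Iic_subset_Iic.2 hcM.le)
        have h2 : ENNReal.ofReal t < γ (Iic c) := lt_of_lt_of_le hM h1
        have h3 : t < F c := by
          have h4 := ENNReal.toReal_strict_mono (measure_ne_top _ _) h2
          rwa [ENNReal.toReal_ofReal ht0] at h4
        exact absurd hc (not_le.2 h3)
      set x := sSup {c | F c ≤ t} with hx
      have hsub1 : Iio x ⊆ {c | F c ≤ t} := by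
        intro c hc
        obtain ⟨c', hc', hlt⟩ := exists_lt_of_lt_csSup hne hc
        exact le_trans (hFmono hlt.le) hc'
      have hsub2 : {c | F c ≤ t} ⊆ Iic x := fun c hc => le_csSup hbdd hc
      -- left: γ (Iio x) ≤ ofReal t
      have hIio : γ (Iio x) ≤ ENNReal.ofReal t := by
        have hunion : Iio x = ⋃ n : ℕ, Iic (x - (n+1:ℝ)⁻¹) := by
          ext c
          simp only [mem_Iio, mem_iUnion, mem_Iic]
          constructor
          · intro hc
            obtain ⟨n, hn⟩ := exists_nat_one_div_lt (sub_pos.2 hc)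
            exact ⟨n, by rw [one_div] at hn; linarith⟩
          · rintro ⟨n, hn⟩
            have : (0:ℝ) < (n+1:ℝ)⁻¹ := by positivity
            linarith
        have hmono : Monotone fun n : ℕ => Iic (x - (n+1:ℝ)⁻¹) := by
          intro m n hmn
          apply Iic_subset_Iic.2
          have : (n+1:ℝ)⁻¹ ≤ (m+1:ℝ)⁻¹ := by
            apply inv_anti₀ (by positivity)
            have := (Nat.cast_le (α := ℝ)).2 hmn
            linarith
          linarith
        rw [hunion, hmono.measure_iUnion]
        refine iSup_le fun n => ?_
        have hmem : x - (n+1:ℝ)⁻¹ ∈ {c | F c ≤ t} := hsub1 (by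
          simp only [mem_Iio]
          have : (0:ℝ) < (n+1:ℝ)⁻¹ := by positivity
          linarith)
        calc γ (Iic (x - (n+1:ℝ)⁻¹)) = ENNReal.ofReal (F (x - (n+1:ℝ)⁻¹)) :=
              (ENNReal.ofReal_toReal (measure_ne_top _ _)).symm
          _ ≤ ENNReal.ofReal t := ENNReal.ofReal_le_ofReal hmem
      -- right: ofReal t ≤ γ (Iic x)
      have hIic : ENNReal.ofReal t ≤ γ (Iic x) := by
        have hinter : Iic x = ⋂ n : ℕ, Iic (x + (n+1:ℝ)⁻¹) := by
          ext c
          simp only [mem_Iic, mem_iInter]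
          constructor
          · intro hc n
            have : (0:ℝ) < (n+1:ℝ)⁻¹ := by positivity
            linarith
          · intro h
            by_contra hcx
            push_neg at hcx
            obtain ⟨n, hn⟩ := exists_nat_one_div_lt (sub_pos.2 hcx)
            rw [one_div] at hn
            linarith [h n]
        have hanti : Antitone fun n : ℕ => Iic (x + (n+1:ℝ)⁻¹) := by
          intro m n hmn
          apply Iic_subset_Iic.2
          have : (n+1:ℝ)⁻¹ ≤ (m+1:ℝ)⁻¹ := by
            apply inv_anti₀ (by positivity)
            have := (Nat.cast_le (α := ℝ)).2 hmn
            linarith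
          linarith
        rw [hinter, hanti.directed_ge.measure_iInter
          (fun n => measurableSet_Iic.nullMeasurableSet) ⟨0, measure_ne_top _ _⟩]
        refine le_iInf fun n => ?_
        have hnot : x + (n+1:ℝ)⁻¹ ∉ {c | F c ≤ t} := by
          intro hmem
          have := le_csSup hbdd hmem
          have hpos : (0:ℝ) < (n+1:ℝ)⁻¹ := by positivity
          rw [← hx] at this
          linarith
        have hgt : t < F (x + (n+1:ℝ)⁻¹) := lt_of_not_ge hnot
        calc ENNReal.ofReal t ≤ ENNReal.ofReal (F (x + (n+1:ℝ)⁻¹)) :=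
              ENNReal.ofReal_le_ofReal hgt.le
          _ = γ (Iic (x + (n+1:ℝ)⁻¹)) := ENNReal.ofReal_toReal (measure_ne_top _ _)
      have hIicIio : γ (Iic x) ≤ γ (Iio x) := by
        have : Iic x ⊆ Iio x ∪ {x} := by
          intro c hc
          rcases lt_or_eq_of_le (mem_Iic.1 hc) with h | h
          · exact Or.inl h
          · exact Or.inr (by simp [h])
        calc γ (Iic x) ≤ γ (Iio x ∪ {x}) := measure_mono this
          _ ≤ γ (Iio x) + γ {x} := measure_union_le _ _
          _ = γ (Iio x) := by rw [hatom x, add_zero]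
      have heq : γ (Iio x) = ENNReal.ofReal t :=
        le_antisymm hIio (le_trans hIic hIicIio)
      have heq2 : γ (Iic x) = ENNReal.ofReal t :=
        le_antisymm (le_trans hIicIio hIio) hIic
      refine le_antisymm ?_ ?_
      · calc γ {c | F c ≤ t} ≤ γ (Iic x) := measure_mono hsub2
          _ = ENNReal.ofReal t := heq2
      · calc ENNReal.ofReal t = γ (Iio x) := heq.symm
          _ ≤ γ {c | F c ≤ t} := measure_mono hsub1
  have : IsProbabilityMeasure (γ.map F) := Measure.isProbabilityMeasure_map hFmeas.aemeasurable
  refine Measure.ext_of_Iic (γ.map F) unif01 fun t => ?_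
  rw [Measure.map_apply hFmeas measurableSet_Iic]
  rcases lt_or_ge t 0 with ht | ht
  · rw [unif01_Iic_neg t ht]
    have : F ⁻¹' Iic t = ∅ := by
      ext c; simp only [mem_preimage, mem_Iic, mem_empty_iff_false, iff_false, not_le]
      exact lt_of_lt_of_le ht (hF0 c)
    rw [this, measure_empty]
  · rcases lt_or_ge t 1 with ht1 | ht1
    · rw [unif01_Iic t ht ht1]
      exact key t ht ht1
    · rw [unif01_Iic_one_le t ht1]
      have : F ⁻¹' Iic t = univ := by
        ext c; simp only [mem_preimage, mem_Iic, mem_univ, iff_true]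
        exact le_trans (hF1 c) ht1
      rw [this, measure_univ]

/-- Partial posteriors are strongly calibrated: let ρ be the joint law of (θ, y),
s : Y → S a measurable summary statistic, and κ the conditional distribution of θ given
s(y), i.e. a disintegration of the joint law ρ' of (θ, s(y)) over the law of s(y).  If f
is a test function whose pushforward under κ(u) is almost surely regular on (a,b), then
the pushforward of ρ under (θ, y) ↦ F_{f_#κ(s(y))}(f(θ)) is uniform on (0,1). -/
theorem stmt_10 {d : ℕ} {Y S : Type*}
    [MeasurableSpace Y] [StandardBorelSpace Y]
    [MeasurableSpace S] [StandardBorelSpace S]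
    (ρ : Measure ((Fin d → ℝ) × Y)) [IsProbabilityMeasure ρ]
    (s : Y → S) (hs : Measurable s)
    (κ : Kernel S (Fin d → ℝ)) [IsMarkovKernel κ]
    (hdis : ∀ (A : Set (Fin d → ℝ)) (B : Set S), MeasurableSet A → MeasurableSet B →
      (ρ.map (fun p : (Fin d → ℝ) × Y => (p.1, s p.2))) (A ×ˢ B) =
        ∫⁻ u in B, κ u A ∂(ρ.map (fun p : (Fin d → ℝ) × Y => s p.2)))
    (f : (Fin d → ℝ) → ℝ) (hf : Measurable f)
    (a b : EReal) (hab : a < b)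
    (hrange : ∀ x, a < (f x : EReal) ∧ (f x : EReal) < b)
    (hreg : ∀ᵐ u ∂(ρ.map (fun p : (Fin d → ℝ) × Y => s p.2)),
      regularOn ((κ u).map f) a b) :
    ρ.map (fun p : (Fin d → ℝ) × Y => ((κ (s p.2)) {x | f x ≤ f p.1}).toReal) = unif01 := by
  set ν : Measure S := ρ.map (fun p : (Fin d → ℝ) × Y => s p.2) with hν
  have hsp : Measurable fun p : (Fin d → ℝ) × Y => s p.2 := hs.comp measurable_snd
  have hpair : Measurable fun p : (Fin d → ℝ) × Y => (p.1, s p.2) :=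
    measurable_fst.prodMk hsp
  haveI : IsProbabilityMeasure ν := Measure.isProbabilityMeasure_map hsp.aemeasurable
  -- measurability of the core function
  have hG0 : Measurable fun q : ℝ × S => κ q.2 {z | f z ≤ q.1} := by
    have ht : MeasurableSet {q : (ℝ × S) × (Fin d → ℝ) | f q.2 ≤ q.1.1} :=
      measurableSet_le (hf.comp measurable_snd) (measurable_fst.fst)
    have h := Kernel.measurable_kernel_prodMk_left
      (κ := κ.comap Prod.snd measurable_snd) ht
    simpa [Kernel.comap_apply] using h
  have hGm : Measurable fun q : (Fin d → ℝ) × S => ((κ q.2) {x | f x ≤ f q.1}).toReal := by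
    apply Measurable.ennreal_toReal
    exact hG0.comp ((hf.comp measurable_fst).prodMk measurable_snd)
  -- rewrite the pushforward through the pair map
  have hmap1 : ρ.map (fun p : (Fin d → ℝ) × Y => ((κ (s p.2)) {x | f x ≤ f p.1}).toReal)
      = (ρ.map (fun p : (Fin d → ℝ) × Y => (p.1, s p.2))).map
          (fun q : (Fin d → ℝ) × S => ((κ q.2) {x | f x ≤ f q.1}).toReal) := by
    rw [Measure.map_map hGm hpair]
    rfl
  -- identify the joint law with the swapped compProd
  have hρ' : ρ.map (fun p : (Fin d → ℝ) × Y => (p.1, s p.2)) = (ν ⊗ₘ κ).map Prod.swap := by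
    haveI : IsProbabilityMeasure (ρ.map (fun p : (Fin d → ℝ) × Y => (p.1, s p.2))) :=
      Measure.isProbabilityMeasure_map hpair.aemeasurable
    refine MeasureTheory.ext_of_generate_finite _ generateFrom_prod.symm isPiSystem_prod
      ?_ ?_
    · rintro _ ⟨A, hA, B, hB, rfl⟩
      simp only [mem_setOf_eq] at hA hB
      rw [hdis A B hA hB, Measure.map_apply measurable_swap (hA.prod hB)]
      have hpre : Prod.swap ⁻¹' (A ×ˢ B) = B ×ˢ A := by
        ext q; simp [mem_prod, and_comm]
      rw [hpre, Measure.compProd_apply_prod hB hA]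
    · haveI : IsProbabilityMeasure ((ν ⊗ₘ κ).map Prod.swap) :=
        Measure.isProbabilityMeasure_map measurable_swap.aemeasurable
      simp [measure_univ]
  rw [hmap1, hρ', Measure.map_map hGm measurable_swap]
  -- conclude by a.e. pointwise probability integral transform
  have hGswap : Measurable ((fun q : (Fin d → ℝ) × S => ((κ q.2) {x | f x ≤ f q.1}).toReal)
      ∘ Prod.swap) := hGm.comp measurable_swap
  refine Measure.ext fun E hE => ?_
  rw [Measure.map_apply hGswap hE, Measure.compProd_apply (hGswap hE)]
  have hae : ∀ᵐ u ∂ν, (κ u) (Prod.mk u ⁻¹'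
      (((fun q : (Fin d → ℝ) × S => ((κ q.2) {x | f x ≤ f q.1}).toReal) ∘ Prod.swap) ⁻¹' E))
      = unif01 E := by
    filter_upwards [hreg] with u hu
    set γ : Measure ℝ := (κ u).map f with hγ
    haveI : IsProbabilityMeasure γ := Measure.isProbabilityMeasure_map hf.aemeasurable
    have hac : γ ≪ volume :=
      hu.2.1.trans (Measure.absolutelyContinuous_of_le Measure.restrict_le_self)
    set Fu : ℝ → ℝ := fun c => (γ (Iic c)).toReal with hFu
    have hFumono : Monotone Fu := fun c d hcd =>
      ENNReal.toReal_mono (measure_ne_top _ _) (measure_mono (Iic_subset_Iic.2 hcd))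
    have hFum : Measurable Fu := hFumono.measurable
    have hpt : ∀ x, (κ u) {z | f z ≤ f x} = γ (Iic (f x)) := fun x =>
      (Measure.map_apply hf measurableSet_Iic).symm
    have hset : Prod.mk u ⁻¹'
        (((fun q : (Fin d → ℝ) × S => ((κ q.2) {x | f x ≤ f q.1}).toReal) ∘ Prod.swap) ⁻¹' E)
        = (Fu ∘ f) ⁻¹' E := by
      ext x
      simp only [mem_preimage, Function.comp_apply, Prod.swap_prod_mk, hpt x, hFu]
    rw [hset, ← Measure.map_apply (hFum.comp hf) hE, ← Measure.map_map hFum hf, ← hγ,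
      pit γ hac]
  rw [lintegral_congr_ae hae, lintegral_const, measure_univ, mul_one]
end

section
/- (The Gaussian-location Bayesian learning procedure is strongly calibrated.) Let Φ denote the CDF of the standard Gaussian N(0,1), and let ρ be the joint law of (θ, y) where θ ~ N(0,1) and y | θ ~ N(θ, 1). The CDF of the Bayesian posterior N(y/2, 1/2) evaluated at θ is Φ(√2 (θ − y/2)). Then the pushforward of ρ under the map (θ, y) ↦ Φ(√2 (θ − y/2)) is exactly the uniform distribution on (0,1). -/
open MeasureTheory ProbabilityTheory Set

/-- The CDF Φ of the standard Gaussian N(0,1). -/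
noncomputable def stdGaussCDF (x : ℝ) : ℝ := ((gaussianReal 0 1) (Iic x)).toReal

/-- The joint law of (θ, y) where θ ~ N(0,1) and y | θ ~ N(θ, 1). -/
noncomputable def jointLaw : Measure (ℝ × ℝ) :=
  (gaussianReal 0 1).bind (fun θ : ℝ => (gaussianReal θ 1).map (fun y : ℝ => (θ, y)))

/-!
Write `y = θ + ε` with `ε ~ N(0,1)` independent of `θ`. The posterior z-score
`√2 (θ - y/2) = (θ - ε)/√2` is then a combination of independent standard Gaussians with
coefficients whose squares sum to `1`, hence is `N(0,1)`. What remains is the probability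
integral transform: a law whose CDF `F` is continuous and strictly increasing is pushed by `F`
to the uniform law on `(0,1)`, because `F ⁻¹' Iic (F c) = Iic c`.
-/

open scoped NNReal

namespace MeasureTheory.Measure

variable {α β γ : Type*} [MeasurableSpace α] [MeasurableSpace β] [MeasurableSpace γ]

theorem map_bind {m : Measure α} {g : α → Measure β} (hg : Measurable g) {f : β → γ}
    (hf : Measurable f) : (m.bind g).map f = m.bind fun a ↦ (g a).map f := by
  ext s hs
  rw [map_apply hf hs, bind_apply (hf hs) hg.aemeasurable,
    bind_apply (f := fun a ↦ (g a).map f) hs ((measurable_map f hf).comp hg).aemeasurable]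
  simp_rw [map_apply hf hs]

theorem bind_map_const_add_map_prodMk {M : Type*} [Add M] [MeasurableSpace M]
    [MeasurableAdd₂ M] (μ ν : Measure M) [SFinite ν] :
    μ.bind (fun x ↦ (ν.map (x + ·)).map (Prod.mk x)) =
      (μ.prod ν).map fun p ↦ (p.1, p.1 + p.2) := by
  rw [Measure.prod_def, map_bind Measurable.map_prodMk_left (by fun_prop)]
  congr with x : 1
  rw [map_map (by fun_prop) (by fun_prop), map_map (by fun_prop) (by fun_prop)]
  rfl

end MeasureTheory.Measure

namespace ProbabilityTheory

lemma gaussianReal_prod_map_linear (m₁ m₂ a b : ℝ) (v₁ v₂ : ℝ≥0) :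
    ((gaussianReal m₁ v₁).prod (gaussianReal m₂ v₂)).map (fun p ↦ a * p.1 + b * p.2) =
      gaussianReal (a * m₁ + b * m₂)
        (.mk (a ^ 2) (sq_nonneg a) * v₁ + .mk (b ^ 2) (sq_nonneg b) * v₂) := by
  rw [← gaussianReal_conv_gaussianReal, ← gaussianReal_map_const_mul,
    ← gaussianReal_map_const_mul, Measure.conv,
    Measure.map_prod_map _ _ (by fun_prop) (by fun_prop),
    Measure.map_map (by fun_prop) (by fun_prop)]
  rfl

variable {μ : Measure ℝ}

lemma cdf_mem_Ioo (hmono : StrictMono (cdf μ)) (x : ℝ) : cdf μ x ∈ Ioo 0 1 :=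
  ⟨(cdf_nonneg μ (x - 1)).trans_lt (hmono (by linarith)),
    (hmono (lt_add_one x)).trans_le (cdf_le_one μ _)⟩

lemma Ioo_subset_range_cdf (hcont : Continuous (cdf μ)) : Ioo 0 1 ⊆ range (cdf μ) :=
  fun _ ht ↦ mem_range_of_exists_le_of_exists_ge hcont
    ((tendsto_cdf_atBot μ).eventually (eventually_le_nhds ht.1)).exists
    ((tendsto_cdf_atTop μ).eventually (eventually_ge_nhds ht.2)).exists

variable [IsProbabilityMeasure μ]

lemma continuous_cdf [NullSingletonClass μ] : Continuous (cdf μ) := by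
  refine continuous_iff_continuousAt.2 fun x ↦ continuousAt_iff_continuous_left_right.2
    ⟨?_, (cdf μ).right_continuous x⟩
  rw [← continuousWithinAt_Iio_iff_Iic, (monotone_cdf μ).continuousWithinAt_Iio_iff_leftLim_eq]
  have h := (cdf μ).measure_singleton x
  rw [measure_cdf, measure_singleton, eq_comm, ENNReal.ofReal_eq_zero, sub_nonpos] at h
  exact le_antisymm ((monotone_cdf μ).leftLim_le le_rfl) h

lemma strictMono_cdf (h : volume ≪ μ) : StrictMono (cdf μ) := by
  intro a b hab
  have hpos : 0 < μ (Ioc a b) := pos_of_ne_zero fun h0 ↦ by simpa [hab.not_ge] using h h0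
  rwa [← measure_cdf μ, StieltjesFunction.measure_Ioc, ENNReal.ofReal_pos, sub_pos] at hpos

lemma map_cdf_eq_restrict_Ioo (hcont : Continuous (cdf μ)) (hmono : StrictMono (cdf μ)) :
    μ.map (cdf μ) = volume.restrict (Ioo 0 1) := by
  have : IsProbabilityMeasure (μ.map (cdf μ)) :=
    Measure.isProbabilityMeasure_map hcont.aemeasurable
  refine Measure.ext_of_Iic _ _ fun t ↦ ?_
  rw [Measure.map_apply hcont.measurable measurableSet_Iic,
    Measure.restrict_apply measurableSet_Iic]
  rcases le_or_gt t 0 with ht0 | ht0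
  · have hF : cdf μ ⁻¹' Iic t = ∅ :=
      eq_empty_of_forall_notMem fun x hx ↦ (cdf_mem_Ioo hmono x).1.not_ge (le_trans hx ht0)
    have hU : Iic t ∩ Ioo 0 1 = ∅ :=
      eq_empty_of_forall_notMem fun x hx ↦ hx.2.1.not_ge (hx.1.trans ht0)
    rw [hF, hU, measure_empty, measure_empty]
  rcases le_or_gt 1 t with ht1 | ht1
  · have hF : cdf μ ⁻¹' Iic t = univ :=
      eq_univ_of_forall fun x ↦ (cdf_mem_Ioo hmono x).2.le.trans ht1
    have hU : Iic t ∩ Ioo 0 1 = Ioo 0 1 :=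
      inter_eq_self_of_subset_right fun x hx ↦ hx.2.le.trans ht1
    rw [hF, hU, measure_univ, Real.volume_Ioo, sub_zero, ENNReal.ofReal_one]
  have hU : Iic t ∩ Ioo 0 1 = Ioc 0 t := by
    ext x
    simp only [mem_inter_iff, mem_Iic, mem_Ioo, mem_Ioc]
    grind
  obtain ⟨c, rfl⟩ := Ioo_subset_range_cdf hcont ⟨ht0, ht1⟩
  have hF : cdf μ ⁻¹' Iic (cdf μ c) = Iic c := by
    ext x
    exact hmono.le_iff_le
  rw [hF, hU, Real.volume_Ioc, sub_zero, ofReal_cdf]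

end ProbabilityTheory

lemma stdGaussCDF_eq_cdf : stdGaussCDF = cdf (gaussianReal 0 1) := by
  funext x
  rw [stdGaussCDF, cdf_eq_real, measureReal_def]

lemma jointLaw_eq_map_prod :
    jointLaw = ((gaussianReal 0 1).prod (gaussianReal 0 1)).map fun p ↦ (p.1, p.1 + p.2) := by
  rw [jointLaw, ← Measure.bind_map_const_add_map_prodMk]
  simp_rw [gaussianReal_map_const_add, zero_add]

lemma jointLaw_map_posterior_zscore :
    jointLaw.map (fun p : ℝ × ℝ ↦ √2 * (p.1 - p.2 / 2)) = gaussianReal 0 1 := by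
  have hz : (fun p : ℝ × ℝ ↦ √2 * (p.1 - p.2 / 2)) ∘ (fun p : ℝ × ℝ ↦ (p.1, p.1 + p.2))
      = fun p ↦ √2 / 2 * p.1 + -(√2 / 2) * p.2 := by
    funext p
    simp only [Function.comp_apply]
    ring
  rw [jointLaw_eq_map_prod, Measure.map_map (by fun_prop) (by fun_prop), hz,
    gaussianReal_prod_map_linear]
  congr 1
  · ring
  · ext
    push_cast
    ring_nf
    norm_num

/-- The Gaussian-location Bayesian learning procedure is strongly calibrated: the
pushforward of the joint law of (θ, y) under (θ, y) ↦ Φ(√2 (θ − y/2)), the CDF of the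
posterior N(y/2, 1/2) evaluated at θ, is exactly the uniform distribution on (0,1). -/
theorem stmt_14 :
    jointLaw.map
      (fun p : ℝ × ℝ => stdGaussCDF (Real.sqrt 2 * (p.1 - p.2 / 2))) = unif01 := by
  have := nullSingletonClass_gaussianReal (μ := 0) one_ne_zero
  have hcont : Continuous (cdf (gaussianReal 0 1)) := continuous_cdf
  rw [stdGaussCDF_eq_cdf, ← Function.comp_def (cdf _),
    ← Measure.map_map hcont.measurable (by fun_prop), jointLaw_map_posterior_zscore]
  exact map_cdf_eq_restrict_Ioo hcont
    (strictMono_cdf (gaussianReal_absolutelyContinuous' 0 one_ne_zero))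
end
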